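/- Let H = ℓ²(ℕ) with truncation projections P_n and Q̃_n = I − P_n. For any bounded operator B on ℓ², the distance from B to the nest algebra of causal operators equals the supremum of the norms of the 'anticausal corners': inf_{Q causal bounded} ‖B − Q‖ = sup_n ‖(I − Q̃_n) B Q̃_n‖. -/

import Mathlib

open scoped InnerProductSpace ComplexInnerProductSpace

noncomputable section

/-- The Hilbert space `ℓ²(ℕ)`. -/
abbrev L2 : Type := lp (fun _ : ℕ => ℂ) 2

/-- The standard orthonormal basis vectors of `ℓ²`. -/
def e (i : ℕ) : L2 := lp.single 2 i 1

/-- Truncation projection onto the first `n+1` coordinates. -/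
def Pn (n : ℕ) : L2 →L[ℂ] L2 :=
  ∑ i ∈ Finset.range (n + 1), (innerSL ℂ (e i)).smulRight (e i)

/-- Causal (lower-triangular) bounded operators. -/
def Causal (Q : L2 →L[ℂ] L2) : Prop :=
  ∀ n, Pn n ∘L Q ∘L Pn n = Pn n ∘L Q

/-!
For causal `Q` the corner `Pₙ (B - Q) (I - Pₙ)` equals `Pₙ B (I - Pₙ)`, and compressing by
projections does not increase norms; this gives `≥`.

For `≤` the infimum is attained. With `μ = supₙ ‖Pₙ B (I - Pₙ)‖` we build, one row at a time, an
operator `T` with `‖T‖ ≤ μ` and the same anticausal corners as `B`, so that `B - T` is causal.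
If the rows `0, …, k` form an operator `C` with `‖C‖ ≤ μ`, the next row is a functional `r` that
is prescribed by `B` on `ker P_{k+1}` and must satisfy `‖C x‖² + |r x|² ≤ μ² ‖x‖²`: this is
Hahn–Banach for the defect seminorm `√(μ² ‖x‖² - ‖C x‖²)`. On `ker P_{k+1}` the required bound is
`‖P_{k+1} B x‖ ≤ μ ‖x‖`, because there `C` already agrees with `P_k B`. Finally the truncations
`P_k T x` have orthogonal increments and bounded norms, so they converge.
-/

section DefectSeminorm

variable {𝕜 E F : Type*} [RCLike 𝕜] [SeminormedAddCommGroup E] [InnerProductSpace 𝕜 E]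
  [SeminormedAddCommGroup F] [InnerProductSpace 𝕜 F]

lemma re_defect_inner_self (C : E →L[𝕜] F) (μ : ℝ) (x : E) :
    RCLike.re ((μ ^ 2 : 𝕜) * ⟪x, x⟫_𝕜 - ⟪C x, C x⟫_𝕜) = μ ^ 2 * ‖x‖ ^ 2 - ‖C x‖ ^ 2 := by
  simp only [map_sub, ← RCLike.ofReal_pow, RCLike.re_ofReal_mul, inner_self_eq_norm_sq]

abbrev defectCore (C : E →L[𝕜] F) (μ : ℝ) (hC : ∀ x, ‖C x‖ ≤ μ * ‖x‖) :
    PreInnerProductSpace.Core 𝕜 E where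
  inner x y := (μ ^ 2 : 𝕜) * ⟪x, y⟫_𝕜 - ⟪C x, C y⟫_𝕜
  conj_inner_symm x y := by simp only [map_sub, map_mul, inner_conj_symm, map_pow,
    RCLike.conj_ofReal]
  re_inner_nonneg x := by
    rw [re_defect_inner_self, sub_nonneg, ← mul_pow]
    exact pow_le_pow_left₀ (norm_nonneg _) (hC x) 2
  add_left x y z := by simp only [inner_add_left, map_add]; ring
  smul_left x y r := by simp only [inner_smul_left, map_smul]; ring

-- A second, explicitly passed norm structure on `E`; `E` keeps its own norm.
def defectSeminorm (C : E →L[𝕜] F) (μ : ℝ) (hC : ∀ x, ‖C x‖ ≤ μ * ‖x‖) : Seminorm 𝕜 E :=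
  @normSeminorm 𝕜 E _
    (@InnerProductSpace.Core.toSeminormedAddCommGroup 𝕜 E _ _ _ (defectCore C μ hC))
    (@InnerProductSpace.Core.toNormedSpace 𝕜 E _ _ _ (defectCore C μ hC))

lemma defectSeminorm_sq (C : E →L[𝕜] F) (μ : ℝ) (hC : ∀ x, ‖C x‖ ≤ μ * ‖x‖) (x : E) :
    defectSeminorm C μ hC x ^ 2 = μ ^ 2 * ‖x‖ ^ 2 - ‖C x‖ ^ 2 := by
  rw [← re_defect_inner_self]
  exact Real.sq_sqrt ((defectCore C μ hC).re_inner_nonneg x)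

theorem exists_extension_norm_sq_add_le (C : E →L[𝕜] F) (μ : ℝ) (hC : ∀ x, ‖C x‖ ≤ μ * ‖x‖)
    (M : Submodule 𝕜 E) (f : E →ₗ[𝕜] 𝕜) (hf : ∀ x ∈ M, ‖C x‖ ^ 2 + ‖f x‖ ^ 2 ≤ μ ^ 2 * ‖x‖ ^ 2) :
    ∃ g : E →L[𝕜] 𝕜, (∀ x ∈ M, g x = f x) ∧ ∀ x, ‖C x‖ ^ 2 + ‖g x‖ ^ 2 ≤ μ ^ 2 * ‖x‖ ^ 2 := by
  set p := defectSeminorm C μ hC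
  have hfp : ∀ x : M, ‖f x‖ ≤ p x := fun x => (sq_le_sq₀ (norm_nonneg _) (apply_nonneg p _)).1
    (by rw [defectSeminorm_sq]; linarith [hf x x.2])
  obtain ⟨g, hgf, hgp⟩ := Module.Dual.exists_extension_of_le_seminorm M (f ∘ₗ M.subtype) hfp
  have hg : ∀ x, ‖C x‖ ^ 2 + ‖g x‖ ^ 2 ≤ μ ^ 2 * ‖x‖ ^ 2 := fun x => by
    nlinarith [pow_le_pow_left₀ (norm_nonneg _) (hgp x) 2, defectSeminorm_sq C μ hC x]
  refine ⟨g.mkContinuous |μ| fun x => ?_, fun x hx => hgf ⟨x, hx⟩, hg⟩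
  refine (sq_le_sq₀ (norm_nonneg _) (by positivity)).1 ?_
  rw [mul_pow, sq_abs]
  linarith [hg x, sq_nonneg ‖C x‖]

end DefectSeminorm

lemma cauchySeq_of_norm_sub_sq {E : Type*} [SeminormedAddCommGroup E] (y : ℕ → E) (M : ℝ)
    (h : ∀ p q, p ≤ q → ‖y q - y p‖ ^ 2 = ‖y q‖ ^ 2 - ‖y p‖ ^ 2) (hM : ∀ k, ‖y k‖ ≤ M) :
    CauchySeq y := by
  have hmono : Monotone fun k => ‖y k‖ ^ 2 := fun p q hpq => by
    linarith [h p q hpq, sq_nonneg ‖y q - y p‖]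
  have hbdd : BddAbove (Set.range fun k => ‖y k‖ ^ 2) :=
    ⟨M ^ 2, Set.forall_mem_range.2 fun k => pow_le_pow_left₀ (norm_nonneg _) (hM k) 2⟩
  have hsq := (tendsto_atTop_ciSup hmono hbdd).cauchySeq
  rw [Metric.cauchySeq_iff'] at hsq ⊢
  intro ε hε
  obtain ⟨N, hN⟩ := hsq (ε ^ 2) (by positivity)
  refine ⟨N, fun n hn => ?_⟩
  have hdist := hN n hn
  rw [Real.dist_eq, abs_of_nonneg (sub_nonneg.2 (hmono hn))] at hdist
  rw [dist_eq_norm, ← sq_lt_sq₀ (norm_nonneg _) hε.le, h N n hn]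
  exact hdist

lemma exists_seq_of_exists_succ {α : Type*} {P : ℕ → α → Prop} {r : ℕ → α → α → Prop}
    (h0 : ∃ a, P 0 a) (h : ∀ k a, P k a → ∃ b, P (k + 1) b ∧ r k a b) :
    ∃ f : ℕ → α, ∀ k, P k (f k) ∧ r k (f k) (f (k + 1)) := by
  choose a₀ ha₀ using h0
  choose g hg using h
  let f : ∀ k, {a // P k a} :=
    fun k => Nat.rec ⟨a₀, ha₀⟩ (fun k a => ⟨g k a a.2, (hg k a a.2).1⟩) k
  exact ⟨fun k => (f k).1, fun k => ⟨(f k).2, (hg k (f k).1 (f k).2).2⟩⟩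

lemma inner_e_e (i j : ℕ) : ⟪e i, e j⟫_ℂ = if i = j then 1 else 0 := by
  rw [e, e, lp.inner_single_left]
  rcases eq_or_ne i j with rfl | h <;> simp [*]

lemma Pn_apply (n : ℕ) (x : L2) :
    Pn n x = ∑ i ∈ Finset.range (n + 1), ⟪e i, x⟫_ℂ • e i := by
  simp [Pn]

lemma inner_e_Pn (i n : ℕ) (x : L2) :
    ⟪e i, Pn n x⟫_ℂ = if i ≤ n then ⟪e i, x⟫_ℂ else 0 := by
  simp_rw [Pn_apply, inner_sum, inner_smul_right, inner_e_e, mul_ite, mul_one, mul_zero,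
    Finset.sum_ite_eq, Finset.mem_range, Nat.lt_succ_iff]

lemma Pn_e (n i : ℕ) : Pn n (e i) = if i ≤ n then e i else 0 := by
  simp [Pn_apply, inner_e_e]

lemma Pn_succ_apply (k : ℕ) (x : L2) :
    Pn (k + 1) x = Pn k x + ⟪e (k + 1), x⟫_ℂ • e (k + 1) := by
  rw [Pn_apply, Pn_apply, Finset.sum_range_succ]

lemma Pn_Pn_of_le {j k : ℕ} (h : j ≤ k) (x : L2) : Pn j (Pn k x) = Pn j x := by
  rw [Pn_apply j (Pn k x), Pn_apply j x]
  refine Finset.sum_congr rfl fun i hi => ?_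
  rw [Finset.mem_range, Nat.lt_succ_iff] at hi
  rw [inner_e_Pn, if_pos (hi.trans h)]

lemma Pn_Pn_of_ge {j k : ℕ} (h : k ≤ j) (x : L2) : Pn j (Pn k x) = Pn k x := by
  rw [Pn_apply k x, map_sum]
  refine Finset.sum_congr rfl fun i hi => ?_
  rw [Finset.mem_range, Nat.lt_succ_iff] at hi
  rw [map_smul, Pn_e, if_pos (hi.trans h)]

lemma Pn_Pn (n : ℕ) (x : L2) : Pn n (Pn n x) = Pn n x :=
  Pn_Pn_of_le le_rfl x

lemma Pn_sub_Pn (n : ℕ) (x : L2) : Pn n (x - Pn n x) = 0 := by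
  rw [map_sub, Pn_Pn, sub_self]

lemma inner_sub_Pn_Pn (n : ℕ) (x y : L2) : ⟪x - Pn n x, Pn n y⟫_ℂ = 0 := by
  rw [Pn_apply n y, inner_sum]
  refine Finset.sum_eq_zero fun i hi => ?_
  rw [Finset.mem_range, Nat.lt_succ_iff] at hi
  rw [inner_smul_right, ← inner_conj_symm (x - Pn n x), inner_sub_right, inner_e_Pn, if_pos hi,
    sub_self, map_zero, mul_zero]

lemma norm_sq_eq_norm_Pn_sq_add (n : ℕ) (x : L2) :
    ‖x‖ ^ 2 = ‖Pn n x‖ ^ 2 + ‖x - Pn n x‖ ^ 2 := by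
  have h := norm_add_sq (𝕜 := ℂ) (x - Pn n x) (Pn n x)
  rw [sub_add_cancel, inner_sub_Pn_Pn] at h
  simp only [map_zero, mul_zero, add_zero] at h
  rw [h, add_comm]

lemma norm_Pn_le (n : ℕ) : ‖Pn n‖ ≤ 1 :=
  ContinuousLinearMap.opNorm_le_bound _ zero_le_one fun x => by
    rw [one_mul, ← sq_le_sq₀ (norm_nonneg _) (norm_nonneg _), norm_sq_eq_norm_Pn_sq_add n x]
    exact le_add_of_nonneg_right (sq_nonneg _)

lemma norm_one_sub_Pn_le (n : ℕ) : ‖1 - Pn n‖ ≤ 1 :=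
  ContinuousLinearMap.opNorm_le_bound _ zero_le_one fun x => by
    rw [one_mul, ← sq_le_sq₀ (norm_nonneg _) (norm_nonneg _), norm_sq_eq_norm_Pn_sq_add n x]
    simp

lemma norm_Pn_add_smul_e_succ_sq (k : ℕ) (y : L2) (c : ℂ) :
    ‖Pn k y + c • e (k + 1)‖ ^ 2 = ‖Pn k y‖ ^ 2 + ‖c‖ ^ 2 := by
  have horth : ⟪Pn k y, e (k + 1)⟫_ℂ = 0 := by
    rw [← inner_conj_symm, inner_e_Pn, if_neg (by omega), map_zero]
  rw [norm_add_sq (𝕜 := ℂ), inner_smul_right, horth]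
  simp [norm_smul, e]

lemma causal_iff (Q : L2 →L[ℂ] L2) : Causal Q ↔ ∀ n x, Pn n x = 0 → Pn n (Q x) = 0 := by
  refine ⟨fun hQ n x hx => ?_, fun hQ n => ?_⟩
  · simpa [hx] using (ContinuousLinearMap.ext_iff.1 (hQ n) x).symm
  · refine ContinuousLinearMap.ext fun x => ?_
    have h := hQ n _ (Pn_sub_Pn n x)
    rw [map_sub, map_sub, sub_eq_zero] at h
    exact h.symm

lemma corner_sub_of_causal (B : L2 →L[ℂ] L2) {Q : L2 →L[ℂ] L2} (hQ : Causal Q) (n : ℕ) :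
    Pn n ∘L (B - Q) ∘L (1 - Pn n) = Pn n ∘L B ∘L (1 - Pn n) := by
  refine ContinuousLinearMap.ext fun x => ?_
  have h := (causal_iff Q).1 hQ n _ (Pn_sub_Pn n x)
  simp only [ContinuousLinearMap.comp_apply, sub_apply, one_apply_eq_self, map_sub] at h ⊢
  rw [sub_eq_zero.1 h]
  abel

lemma norm_corner_le (A : L2 →L[ℂ] L2) (n : ℕ) : ‖Pn n ∘L A ∘L (1 - Pn n)‖ ≤ ‖A‖ :=
  calc ‖Pn n ∘L A ∘L (1 - Pn n)‖ ≤ ‖Pn n‖ * (‖A‖ * ‖1 - Pn n‖) := by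
        grw [ContinuousLinearMap.opNorm_comp_le, ContinuousLinearMap.opNorm_comp_le]
    _ ≤ 1 * (‖A‖ * 1) := by gcongr; exacts [norm_Pn_le n, norm_one_sub_Pn_le n]
    _ = ‖A‖ := by ring

lemma norm_Pn_apply_le_of_Pn_eq_zero {B : L2 →L[ℂ] L2} {μ : ℝ} {n : ℕ} {x : L2}
    (hB : ‖Pn n ∘L B ∘L (1 - Pn n)‖ ≤ μ) (hx : Pn n x = 0) : ‖Pn n (B x)‖ ≤ μ * ‖x‖ := by
  simpa [hx] using (Pn n ∘L B ∘L (1 - Pn n)).le_of_opNorm_le hB x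

lemma exists_limit_of_Pn_apply_succ_eq (R : ℕ → L2 →L[ℂ] L2) (μ : ℝ)
    (hR : ∀ k x, Pn k (R (k + 1) x) = R k x) (hμ : ∀ k, ‖R k‖ ≤ μ) :
    ∃ T : L2 →L[ℂ] L2, ‖T‖ ≤ μ ∧ ∀ k x, Pn k (T x) = R k x := by
  have hcompat : ∀ j k, j ≤ k → ∀ x, Pn j (R k x) = R j x := by
    intro j k hjk x
    induction k, hjk using Nat.le_induction with
    | base => rw [← hR j x, Pn_Pn]
    | succ k hjk ih => rw [← Pn_Pn_of_le hjk, hR k x, ih]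
  have hcauchy : ∀ x, CauchySeq fun k => R k x := fun x =>
    cauchySeq_of_norm_sub_sq _ (μ * ‖x‖)
      (fun p q hpq => by
        rw [← hcompat p q hpq x, norm_sq_eq_norm_Pn_sq_add p (R q x)]
        ring)
      (fun k => (R k).le_of_opNorm_le (hμ k) x)
  choose F hF using fun x => cauchySeq_tendsto_of_complete (hcauchy x)
  let T := continuousLinearMapOfTendsto R (tendsto_pi_nhds.2 hF)
  have hT : ∀ x, Filter.Tendsto (fun k => R k x) Filter.atTop (nhds (T x)) := hF
  refine ⟨T, ?_, fun k x => ?_⟩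
  · refine T.opNorm_le_bound ((norm_nonneg _).trans (hμ 0)) fun x => ?_
    exact le_of_tendsto (hT x).norm
      (Filter.Eventually.of_forall fun k => (R k).le_of_opNorm_le (hμ k) x)
  · refine tendsto_nhds_unique (((Pn k).continuous.tendsto _).comp (hT x)) ?_
    refine tendsto_const_nhds.congr' ?_
    filter_upwards [Filter.eventually_ge_atTop k] with n hn
    exact (hcompat k n hn x).symm

structure IsPartialCompletion (B : L2 →L[ℂ] L2) (μ : ℝ) (k : ℕ) (C : L2 →L[ℂ] L2) : Prop where
  Pn_apply_eq : ∀ x, Pn k (C x) = C x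
  corner_eq : ∀ j ≤ k, ∀ x, Pn j x = 0 → Pn j (C x) = Pn j (B x)
  norm_le : ‖C‖ ≤ μ

lemma isPartialCompletion_zero {B : L2 →L[ℂ] L2} {μ : ℝ}
    (hB : ‖Pn 0 ∘L B ∘L (1 - Pn 0)‖ ≤ μ) :
    IsPartialCompletion B μ 0 (Pn 0 ∘L B ∘L (1 - Pn 0)) where
  Pn_apply_eq x := Pn_Pn 0 _
  corner_eq j hj x hx := by
    obtain rfl := Nat.le_zero.1 hj
    simp [hx, Pn_Pn]
  norm_le := hB

lemma IsPartialCompletion.exists_succ {B C : L2 →L[ℂ] L2} {μ : ℝ} {k : ℕ}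
    (hB : ‖Pn (k + 1) ∘L B ∘L (1 - Pn (k + 1))‖ ≤ μ) (hC : IsPartialCompletion B μ k C) :
    ∃ C', IsPartialCompletion B μ (k + 1) C' ∧ ∀ x, Pn k (C' x) = C x := by
  have hker : ∀ x, Pn (k + 1) x = 0 → C x = Pn k (B x) := fun x hx => by
    have hx' : Pn k x = 0 := by rw [← Pn_Pn_of_le k.le_succ, hx, map_zero]
    rw [← hC.Pn_apply_eq x, hC.corner_eq k le_rfl x hx']
  obtain ⟨r, hrB, hr⟩ := exists_extension_norm_sq_add_le C μ (C.le_of_opNorm_le hC.norm_le)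
    (LinearMap.ker (Pn (k + 1)).toLinearMap) ((innerSL ℂ (e (k + 1))).comp B) fun x hx => by
      rw [LinearMap.mem_ker] at hx
      calc ‖C x‖ ^ 2 + ‖⟪e (k + 1), B x⟫_ℂ‖ ^ 2 = ‖Pn (k + 1) (B x)‖ ^ 2 := by
            rw [hker x hx, ← norm_Pn_add_smul_e_succ_sq, ← Pn_succ_apply]
        _ ≤ (μ * ‖x‖) ^ 2 :=
            pow_le_pow_left₀ (norm_nonneg _) (norm_Pn_apply_le_of_Pn_eq_zero hB hx) 2
        _ = μ ^ 2 * ‖x‖ ^ 2 := mul_pow _ _ _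
  set C' := C + r.smulRight (e (k + 1))
  have hC'_apply : ∀ x, C' x = Pn k (C x) + r x • e (k + 1) := fun x => by
    simp [C', hC.Pn_apply_eq]
  have hPn_C' : ∀ j ≤ k, ∀ x, Pn j (C' x) = Pn j (C x) := fun j hj x => by
    rw [hC'_apply, map_add, map_smul, Pn_e, if_neg (by omega), smul_zero, add_zero,
      Pn_Pn_of_le hj]
  have hPn_succ_C' : ∀ x, Pn (k + 1) (C' x) = C' x := fun x => by
    rw [hC'_apply, map_add, map_smul, Pn_e, if_pos le_rfl, Pn_Pn_of_ge k.le_succ]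
  refine ⟨C', ⟨hPn_succ_C', fun j hj x hx => ?_, ?_⟩, fun x => ?_⟩
  · rcases hj.lt_or_eq with hj | rfl
    · rw [Nat.lt_succ_iff] at hj
      rw [hPn_C' j hj, hC.corner_eq j hj x hx]
    · have hrx : r x = ⟪e (k + 1), B x⟫_ℂ := hrB x hx
      rw [hPn_succ_C', hC'_apply, hC.Pn_apply_eq, hker x hx, hrx, Pn_succ_apply]
  · refine C'.opNorm_le_bound ((norm_nonneg _).trans hC.norm_le) fun x => ?_
    refine (sq_le_sq₀ (norm_nonneg _) ((mul_nonneg ((norm_nonneg _).trans hC.norm_le)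
      (norm_nonneg _)))).1 ?_
    rw [hC'_apply, norm_Pn_add_smul_e_succ_sq, hC.Pn_apply_eq, mul_pow]
    exact hr x
  · rw [hPn_C' k le_rfl, hC.Pn_apply_eq]

theorem exists_causal_norm_sub_le (B : L2 →L[ℂ] L2) (μ : ℝ)
    (hB : ∀ n, ‖Pn n ∘L B ∘L (1 - Pn n)‖ ≤ μ) : ∃ Q, Causal Q ∧ ‖B - Q‖ ≤ μ := by
  obtain ⟨R, hR⟩ := exists_seq_of_exists_succ (P := IsPartialCompletion B μ)
    (r := fun k C C' => ∀ x, Pn k (C' x) = C x) ⟨_, isPartialCompletion_zero (hB 0)⟩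
    fun k C hC => hC.exists_succ (hB (k + 1))
  obtain ⟨T, hT, hTR⟩ := exists_limit_of_Pn_apply_succ_eq R μ (fun k => (hR k).2)
    fun k => (hR k).1.norm_le
  refine ⟨B - T, (causal_iff _).2 fun n x hx => ?_, by rwa [sub_sub_cancel]⟩
  rw [sub_apply, map_sub, hTR, ← (hR n).1.Pn_apply_eq,
    (hR n).1.corner_eq n le_rfl x hx, sub_self]

/-- Arveson's distance formula: the distance from a bounded operator `B` on `ℓ²` to the
nest algebra of causal operators equals the supremum of the norms of the anticausal
corners `P_n B (I − P_n)`. -/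
theorem stmt13 (B : L2 →L[ℂ] L2) :
    sInf {r : ℝ | ∃ Q : L2 →L[ℂ] L2, Causal Q ∧ r = ‖B - Q‖} =
      ⨆ n : ℕ, ‖Pn n ∘L B ∘L (1 - Pn n)‖ := by
  have hbdd : BddAbove (Set.range fun n => ‖Pn n ∘L B ∘L (1 - Pn n)‖) :=
    ⟨‖B‖, Set.forall_mem_range.2 (norm_corner_le B)⟩
  have hbddBelow : BddBelow {r : ℝ | ∃ Q : L2 →L[ℂ] L2, Causal Q ∧ r = ‖B - Q‖} := by
    refine ⟨0, ?_⟩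
    rintro r ⟨Q, -, rfl⟩
    exact norm_nonneg _
  obtain ⟨Q, hQ, hBQ⟩ := exists_causal_norm_sub_le B _ (le_ciSup hbdd)
  refine le_antisymm ((csInf_le hbddBelow ⟨Q, hQ, rfl⟩).trans hBQ) (le_csInf ⟨_, Q, hQ, rfl⟩ ?_)
  rintro r ⟨Q', hQ', rfl⟩
  exact ciSup_le fun n => corner_sub_of_causal B hQ' n ▸ norm_corner_le (B - Q') n
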